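/- Let ℓ ≥ 1 and let α, β, γ be partitions of n with at most ℓ parts. Then g(α,β,γ) = ∑_{σ¹,σ²,σ³ ∈ S_ℓ} sgn(σ¹)·sgn(σ²)·sgn(σ³) · C(a(σ¹), b(σ²), c(σ³)), where the sum is over all triples of permutations of {1,…,ℓ}, and where a(σ)_i = α_i + σ(i) − i, b(σ)_j = β_j + σ(j) − j, and c(σ)_k = γ_k + σ(k) − k for 1 ≤ i, j, k ≤ ℓ. -/

import Mathlib

open Finset

/-- A partition with at most `ℓ` parts: a weakly decreasing tuple of naturals. -/
def IsPartition {ℓ : ℕ} (lam : Fin ℓ → ℕ) : Prop :=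
  ∀ i j : Fin ℓ, i ≤ j → lam j ≤ lam i

/-- The index type for the `3ℓ` variables `x_1,…,x_ℓ,y_1,…,y_ℓ,z_1,…,z_ℓ`. -/
abbrev KVar (ℓ : ℕ) := Fin ℓ ⊕ (Fin ℓ ⊕ Fin ℓ)

noncomputable section

/-- The variable `x_i`. -/
def Xv (ℓ : ℕ) (i : Fin ℓ) : MvPowerSeries (KVar ℓ) ℤ := MvPowerSeries.X (Sum.inl i)

/-- The variable `y_j`. -/
def Yv (ℓ : ℕ) (j : Fin ℓ) : MvPowerSeries (KVar ℓ) ℤ := MvPowerSeries.X (Sum.inr (Sum.inl j))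

/-- The variable `z_k`. -/
def Zv (ℓ : ℕ) (k : Fin ℓ) : MvPowerSeries (KVar ℓ) ℤ := MvPowerSeries.X (Sum.inr (Sum.inr k))

/-- The Vandermonde product `∏_{i<j} (v i - v j)`. -/
def vdm (ℓ : ℕ) (v : Fin ℓ → MvPowerSeries (KVar ℓ) ℤ) : MvPowerSeries (KVar ℓ) ℤ :=
  ∏ i : Fin ℓ, ∏ j : Fin ℓ, if i < j then v i - v j else 1

/-- The Cauchy kernel `∏_{i,j,k} (1 - x_i y_j z_k)⁻¹`. -/
def cauchyKernel (ℓ : ℕ) : MvPowerSeries (KVar ℓ) ℤ :=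
  ∏ i : Fin ℓ, ∏ j : Fin ℓ, ∏ k : Fin ℓ,
    MvPowerSeries.invOfUnit (1 - Xv ℓ i * Yv ℓ j * Zv ℓ k) 1

/-- The truncated Cauchy kernel `∏_{i,j,k} (1 + x_iy_jz_k + ⋯ + (x_iy_jz_k)^D)`. -/
def truncKernel (ℓ D : ℕ) : MvPowerSeries (KVar ℓ) ℤ :=
  ∏ i : Fin ℓ, ∏ j : Fin ℓ, ∏ k : Fin ℓ,
    ∑ d ∈ Finset.range (D + 1), (Xv ℓ i * Yv ℓ j * Zv ℓ k) ^ d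

/-- The exponent vector of the monomial `∏ x_i^{a_i} ∏ y_j^{b_j} ∏ z_k^{c_k}`. -/
def expVec3 (ℓ : ℕ) (a b c : Fin ℓ → ℕ) : KVar ℓ →₀ ℕ :=
  Finsupp.equivFunOnFinite.symm (Sum.elim a (Sum.elim b c))

/-- The staircase-shifted exponent vector of
`∏ x_i^{λ_i+ℓ-i} ∏ y_j^{μ_j+ℓ-j} ∏ z_k^{ν_k+ℓ-k}` (here `i,j,k` are 0-based). -/
def kronExp (ℓ : ℕ) (lam mu nu : Fin ℓ → ℕ) : KVar ℓ →₀ ℕ :=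
  expVec3 ℓ (fun i => lam i + (ℓ - 1 - (i : ℕ))) (fun j => mu j + (ℓ - 1 - (j : ℕ)))
    (fun k => nu k + (ℓ - 1 - (k : ℕ)))

/-- The Kronecker coefficient `g(λ,μ,ν)`, defined as the coefficient of the monomial
`∏ x_i^{λ_i+ℓ-i} ∏ y_j^{μ_j+ℓ-j} ∏ z_k^{ν_k+ℓ-k}` in
`Δ(x)Δ(y)Δ(z) ∏_{i,j,k} (1-x_iy_jz_k)⁻¹`. -/
def kron (ℓ : ℕ) (lam mu nu : Fin ℓ → ℕ) : ℤ :=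
  MvPowerSeries.coeff (kronExp ℓ lam mu nu)
    (vdm ℓ (Xv ℓ) * vdm ℓ (Yv ℓ) * vdm ℓ (Zv ℓ) * cauchyKernel ℓ)

end

/-- `C(a,b,c)`: the number of 3-dimensional contingency arrays with 2-way
marginals `a`, `b`, `c`. -/
noncomputable def contCount (ℓ : ℕ) (a b c : Fin ℓ → ℤ) : ℕ :=
  Set.ncard {x : Fin ℓ → Fin ℓ → Fin ℓ → ℕ |
    (∀ i, (∑ j, ∑ k, (x i j k : ℤ)) = a i) ∧
    (∀ j, (∑ i, ∑ k, (x i j k : ℤ)) = b j) ∧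
    (∀ k, (∑ i, ∑ j, (x i j k : ℤ)) = c k)}

/-!
Expanding each Vandermonde product by the Leibniz formula writes `Δ(x)Δ(y)Δ(z)` as a signed sum,
over triples of permutations, of monomials `x^(δ-σ₁) y^(δ-σ₂) z^(δ-σ₃)` with `δ = (ℓ-1, …, 1, 0)`.
Each factor `(1 - x_i y_j z_k)⁻¹` of the Cauchy kernel is a geometric series, so the coefficient of
`x^a y^b z^c` in the kernel counts the arrays `(d_ijk)` with `∑ d_ijk · (e_i + e_j + e_k) = (a,b,c)`,
i.e. the contingency arrays with marginals `a, b, c`. Multiplying by a monomial shifts the exponent;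
when the shift leaves the nonnegative orthant the coefficient vanishes, as does `C` at a negative
marginal.
-/

open Finset Equiv MvPowerSeries

section Vandermonde
variable {R : Type*} [CommRing R] {ℓ : ℕ}

theorem prod_sub_of_lt_eq_det_vandermonde_rev (v : Fin ℓ → R) :
    (∏ i, ∏ j, if i < j then v i - v j else 1) = (Matrix.vandermonde (v ∘ Fin.rev)).det := by
  rw [Matrix.det_vandermonde, Finset.prod_comm]
  refine Fintype.prod_equiv Fin.revPerm _ _ fun j => ?_
  rw [← Finset.filter_lt_eq_Ioi, Finset.prod_filter]
  refine Fintype.prod_equiv Fin.revPerm _ _ fun i => ?_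
  simp [Fin.rev_lt_rev]

theorem det_vandermonde_rev_eq_sum_sign (v : Fin ℓ → R) :
    (Matrix.vandermonde (v ∘ Fin.rev)).det =
      ∑ σ : Perm (Fin ℓ), (Perm.sign σ : ℤ) • ∏ i, v i ^ (ℓ - 1 - (σ i : ℕ)) := by
  rw [← Matrix.det_transpose, Matrix.det_apply]
  refine Fintype.sum_equiv (Fin.revPerm.permCongr) _ _ fun σ => ?_
  rw [Perm.sign_permCongr, Units.smul_def]
  congr 1
  refine Fintype.prod_equiv Fin.revPerm _ _ fun i => ?_
  have := (σ i).isLt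
  simp only [Matrix.transpose_apply, Matrix.vandermonde_apply, Function.comp_apply,
    Fin.revPerm_apply, permCongr_apply, Fin.revPerm_symm, Fin.rev_rev, Fin.val_rev]
  congr 1
  omega

end Vandermonde

namespace Finsupp
variable {σ : Type*}

theorem exists_nsmul_eq_iff_of_ne_zero {m e : σ →₀ ℕ} (he : e ≠ 0) :
    (∃ d : ℕ, d • m = e) ↔ m ≤ e ∧ ∃ d : ℕ, d • m = e - m := by
  constructor
  · rintro ⟨_ | d, rfl⟩
    · exact absurd (zero_nsmul m) he
    · rw [succ_nsmul]
      exact ⟨le_add_self, d, (add_tsub_cancel_right _ _).symm⟩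
  · rintro ⟨hle, d, hd⟩
    exact ⟨d + 1, by rw [succ_nsmul, hd, tsub_add_cancel_of_le hle]⟩

theorem nsmul_left_injective_of_ne_zero {m : σ →₀ ℕ} (hm : m ≠ 0) :
    Function.Injective fun d : ℕ => d • m := by
  obtain ⟨s, hs⟩ := Finsupp.ne_iff.1 hm
  intro d d' h
  exact (by simpa using DFunLike.congr_fun h s : d = d' ∨ m s = 0).resolve_right hs

end Finsupp

namespace MvPowerSeries
variable {σ R : Type*} [CommRing R]

open scoped Classical in
noncomputable def geomSeries (m : σ →₀ ℕ) : MvPowerSeries σ R :=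
  fun e => if ∃ d : ℕ, d • m = e then 1 else 0

open scoped Classical in
theorem coeff_geomSeries (m e : σ →₀ ℕ) :
    coeff e (geomSeries m : MvPowerSeries σ R) = if ∃ d : ℕ, d • m = e then 1 else 0 := rfl

theorem one_sub_monomial_mul_geomSeries {m : σ →₀ ℕ} (hm : m ≠ 0) :
    (1 - monomial m 1) * (geomSeries m : MvPowerSeries σ R) = 1 := by
  classical
  ext e
  rw [sub_mul, one_mul, map_sub, coeff_monomial_mul, coeff_one, one_mul]
  simp only [coeff_geomSeries]
  by_cases he : e = 0
  · subst he
    simp [hm]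
  · rw [Finsupp.exists_nsmul_eq_iff_of_ne_zero he]
    by_cases hle : m ≤ e <;> simp [hle, he]

theorem invOfUnit_one_sub_monomial {m : σ →₀ ℕ} (hm : m ≠ 0) :
    invOfUnit (1 - monomial m 1) 1 = (geomSeries m : MvPowerSeries σ R) := by
  classical
  refine (left_inv_eq_right_inv ?_ (mul_invOfUnit _ _ ?_)).symm
  · rw [mul_comm, one_sub_monomial_mul_geomSeries hm]
  · rw [map_sub, map_one, ← coeff_zero_eq_constantCoeff_apply, coeff_monomial, if_neg hm.symm,
      sub_zero, Units.val_one]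

theorem coeff_prod_geomSeries {ι : Type*} [Fintype ι] {m : ι → σ →₀ ℕ}
    (hm : ∀ i, m i ≠ 0) (e : σ →₀ ℕ) :
    coeff e (∏ i, (geomSeries (m i) : MvPowerSeries σ R)) =
      {d : ι → ℕ | ∑ i, d i • m i = e}.ncard := by
  classical
  let toAntidiag (d : ι → ℕ) : ι →₀ σ →₀ ℕ := Finsupp.equivFunOnFinite.symm fun i => d i • m i
  have hinj : Function.Injective toAntidiag := fun d d' h => funext fun i =>
    Finsupp.nsmul_left_injective_of_ne_zero (hm i) (DFunLike.congr_fun h i)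
  have himage : toAntidiag '' {d | ∑ i, d i • m i = e} =
      ↑((univ.finsuppAntidiag e).filter fun l => ∀ i, ∃ d : ℕ, d • m i = l i) := by
    ext l
    simp only [Set.mem_image, Set.mem_ofPred_eq, coe_filter, mem_finsuppAntidiag, subset_univ,
      and_true]
    constructor
    · rintro ⟨d, rfl, rfl⟩
      exact ⟨by simp [toAntidiag], fun i => ⟨d i, rfl⟩⟩
    · rintro ⟨hsum, hl⟩
      choose d hd using hl
      refine ⟨d, ?_, Finsupp.ext hd⟩
      simp [hd, hsum]
  rw [coeff_prod, ← Set.ncard_image_of_injective _ hinj, himage, Set.ncard_coe_finset,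
    ← sum_boole]
  simp only [coeff_geomSeries]
  exact sum_congr rfl fun l _ => Fintype.prod_boole

end MvPowerSeries

section Kronecker
variable {ℓ : ℕ}

noncomputable def cellExp (ℓ : ℕ) (t : Fin ℓ × Fin ℓ × Fin ℓ) : KVar ℓ →₀ ℕ :=
  Finsupp.single (Sum.inl t.1) 1 + Finsupp.single (Sum.inr (Sum.inl t.2.1)) 1 +
    Finsupp.single (Sum.inr (Sum.inr t.2.2)) 1

theorem cellExp_ne_zero (t : Fin ℓ × Fin ℓ × Fin ℓ) : cellExp ℓ t ≠ 0 :=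
  Finsupp.ne_iff.2 ⟨Sum.inl t.1, by simp [cellExp]⟩

theorem Xv_mul_Yv_mul_Zv (i j k : Fin ℓ) :
    Xv ℓ i * Yv ℓ j * Zv ℓ k = monomial (cellExp ℓ (i, j, k)) 1 := by
  simp [Xv, Yv, Zv, MvPowerSeries.X, monomial_mul_monomial, cellExp]

theorem cauchyKernel_eq_prod_geomSeries :
    cauchyKernel ℓ = ∏ t : Fin ℓ × Fin ℓ × Fin ℓ, geomSeries (cellExp ℓ t) := by
  simp only [cauchyKernel, Fintype.prod_prod_type, Xv_mul_Yv_mul_Zv,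
    invOfUnit_one_sub_monomial (cellExp_ne_zero _)]

theorem sum_smul_cellExp_eq_expVec3_iff (d : Fin ℓ × Fin ℓ × Fin ℓ → ℕ) (a b c : Fin ℓ → ℕ) :
    ∑ t, d t • cellExp ℓ t = expVec3 ℓ a b c ↔
      (∀ i, ∑ j, ∑ k, d (i, j, k) = a i) ∧ (∀ j, ∑ i, ∑ k, d (i, j, k) = b j) ∧
        ∀ k, ∑ i, ∑ j, d (i, j, k) = c k := by
  simp [Finsupp.ext_iff, Sum.forall, expVec3, cellExp, Finsupp.single_apply, Fintype.sum_prod_type]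

theorem coeff_cauchyKernel (a b c : Fin ℓ → ℕ) :
    coeff (expVec3 ℓ a b c) (cauchyKernel ℓ) =
      contCount ℓ (fun i => a i) (fun j => b j) (fun k => c k) := by
  let curry3 (x : Fin ℓ → Fin ℓ → Fin ℓ → ℕ) (t : Fin ℓ × Fin ℓ × Fin ℓ) : ℕ := x t.1 t.2.1 t.2.2
  have hcurry : Function.Bijective curry3 :=
    ⟨fun x y h => funext₃ fun i j k => congr_fun h (i, j, k),
      fun d => ⟨fun i j k => d (i, j, k), rfl⟩⟩
  rw [cauchyKernel_eq_prod_geomSeries, coeff_prod_geomSeries cellExp_ne_zero, contCount,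
    ← Set.ncard_preimage_of_injective_subset_range hcurry.1 (by simp [hcurry.2.range_eq])]
  congr 2
  ext x
  simp only [Set.mem_preimage, Set.mem_ofPred_eq, sum_smul_cellExp_eq_expVec3_iff, curry3]
  norm_cast

theorem contCount_eq_zero_of_exists_neg {a b c : Fin ℓ → ℤ}
    (h : (∃ i, a i < 0) ∨ (∃ j, b j < 0) ∨ ∃ k, c k < 0) : contCount ℓ a b c = 0 := by
  refine (congrArg Set.ncard (Set.eq_empty_of_forall_notMem ?_)).trans (Set.ncard_empty _)
  rintro x ⟨ha, hb, hc⟩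
  rcases h with ⟨i, hi⟩ | ⟨j, hj⟩ | ⟨k, hk⟩
  · have : (0 : ℤ) ≤ ∑ j, ∑ k, (x i j k : ℤ) := by positivity
    linarith [ha i]
  · have : (0 : ℤ) ≤ ∑ i, ∑ k, (x i j k : ℤ) := by positivity
    linarith [hb j]
  · have : (0 : ℤ) ≤ ∑ i, ∑ j, (x i j k : ℤ) := by positivity
    linarith [hc k]

theorem expVec3_sub_expVec3 (a b c a' b' c' : Fin ℓ → ℕ) :
    expVec3 ℓ a b c - expVec3 ℓ a' b' c' = expVec3 ℓ (a - a') (b - b') (c - c') := by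
  ext (i | j | k) <;> rfl

theorem expVec3_le_expVec3_iff {a b c a' b' c' : Fin ℓ → ℕ} :
    expVec3 ℓ a' b' c' ≤ expVec3 ℓ a b c ↔ a' ≤ a ∧ b' ≤ b ∧ c' ≤ c := by
  simp only [Finsupp.le_def, Sum.forall, Pi.le_def]
  rfl

theorem coeff_monomial_mul_cauchyKernel (a b c a' b' c' : Fin ℓ → ℕ) :
    coeff (expVec3 ℓ a b c) (monomial (expVec3 ℓ a' b' c') (1 : ℤ) * cauchyKernel ℓ) =
      contCount ℓ (fun i => (a i : ℤ) - a' i) (fun j => (b j : ℤ) - b' j)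
        (fun k => (c k : ℤ) - c' k) := by
  rw [coeff_monomial_mul, one_mul]
  split_ifs with hle <;> rw [expVec3_le_expVec3_iff] at hle
  · obtain ⟨ha, hb, hc⟩ := hle
    rw [expVec3_sub_expVec3, coeff_cauchyKernel]
    congr 2 <;> funext i
    exacts [Nat.cast_sub (ha i), Nat.cast_sub (hb i), Nat.cast_sub (hc i)]
  · simp only [Pi.le_def, not_and_or, not_forall, not_le] at hle
    rw [contCount_eq_zero_of_exists_neg, Nat.cast_zero]
    rcases hle with ⟨i, hi⟩ | ⟨j, hj⟩ | ⟨k, hk⟩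
    · exact Or.inl ⟨i, by omega⟩
    · exact Or.inr (Or.inl ⟨j, by omega⟩)
    · exact Or.inr (Or.inr ⟨k, by omega⟩)

theorem prod_Xv_pow_mul_prod_Yv_pow_mul_prod_Zv_pow (a b c : Fin ℓ → ℕ) :
    (∏ i, Xv ℓ i ^ a i) * (∏ j, Yv ℓ j ^ b j) * (∏ k, Zv ℓ k ^ c k) =
      monomial (expVec3 ℓ a b c) 1 := by
  simp only [Xv, Yv, Zv, X_pow_eq, prod_monomial, monomial_mul_monomial, prod_const_one, mul_one,
    expVec3, Finsupp.equivFunOnFinite_symm_eq_sum, Fintype.sum_sum_type, add_assoc]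
  rfl

theorem vdm_eq_sum_sign (v : Fin ℓ → MvPowerSeries (KVar ℓ) ℤ) :
    vdm ℓ v = ∑ σ : Perm (Fin ℓ), (Perm.sign σ : ℤ) • ∏ i, v i ^ (ℓ - 1 - (σ i : ℕ)) :=
  (prod_sub_of_lt_eq_det_vandermonde_rev v).trans (det_vandermonde_rev_eq_sum_sign v)

theorem vdm_mul_vdm_mul_vdm :
    vdm ℓ (Xv ℓ) * vdm ℓ (Yv ℓ) * vdm ℓ (Zv ℓ) =
      ∑ σ₁ : Perm (Fin ℓ), ∑ σ₂ : Perm (Fin ℓ), ∑ σ₃ : Perm (Fin ℓ),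
        ((Perm.sign σ₁ : ℤ) * (Perm.sign σ₂ : ℤ) * (Perm.sign σ₃ : ℤ)) •
          monomial (expVec3 ℓ (fun i => ℓ - 1 - (σ₁ i : ℕ)) (fun j => ℓ - 1 - (σ₂ j : ℕ))
            (fun k => ℓ - 1 - (σ₃ k : ℕ))) 1 := by
  rw [vdm_eq_sum_sign, vdm_eq_sum_sign, vdm_eq_sum_sign, mul_assoc, sum_mul_sum, sum_mul_sum]
  simp_rw [mul_sum, smul_mul_smul_comm, ← mul_assoc, prod_Xv_pow_mul_prod_Yv_pow_mul_prod_Zv_pow]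

end Kronecker

theorem stmt7_general (ℓ : ℕ) (α β γ : Fin ℓ → ℕ) :
    kron ℓ α β γ =
      ∑ σ₁ : Equiv.Perm (Fin ℓ), ∑ σ₂ : Equiv.Perm (Fin ℓ), ∑ σ₃ : Equiv.Perm (Fin ℓ),
        ((Equiv.Perm.sign σ₁ : ℤ) * (Equiv.Perm.sign σ₂ : ℤ) * (Equiv.Perm.sign σ₃ : ℤ)) *
          (contCount ℓ (fun i => (α i : ℤ) + (σ₁ i : ℕ) - (i : ℕ))
            (fun j => (β j : ℤ) + (σ₂ j : ℕ) - (j : ℕ))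
            (fun k => (γ k : ℤ) + (σ₃ k : ℕ) - (k : ℕ)) : ℤ) := by
  simp only [kron, kronExp, vdm_mul_vdm_mul_vdm, sum_mul, map_sum, smul_mul_assoc, map_zsmul,
    coeff_monomial_mul_cauchyKernel, smul_eq_mul]
  refine sum_congr rfl fun σ₁ _ => sum_congr rfl fun σ₂ _ => sum_congr rfl fun σ₃ _ => ?_
  congr 3 <;> funext i
  · have := (σ₁ i).isLt; omega
  · have := (σ₂ i).isLt; omega
  · have := (σ₃ i).isLt; omega

/-- `g(α,β,γ)` as a signed sum of contingency-array counts over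
triples of permutations. -/
theorem stmt7 (ℓ n : ℕ) (hℓ : 1 ≤ ℓ)
    (α β γ : Fin ℓ → ℕ)
    (hα : IsPartition α) (hβ : IsPartition β) (hγ : IsPartition γ)
    (hαs : ∑ i, α i = n) (hβs : ∑ i, β i = n) (hγs : ∑ i, γ i = n) :
    kron ℓ α β γ =
      ∑ σ₁ : Equiv.Perm (Fin ℓ), ∑ σ₂ : Equiv.Perm (Fin ℓ), ∑ σ₃ : Equiv.Perm (Fin ℓ),
        ((Equiv.Perm.sign σ₁ : ℤ) * (Equiv.Perm.sign σ₂ : ℤ) * (Equiv.Perm.sign σ₃ : ℤ)) *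
          (contCount ℓ (fun i => (α i : ℤ) + (σ₁ i : ℕ) - (i : ℕ))
            (fun j => (β j : ℤ) + (σ₂ j : ℕ) - (j : ℕ))
            (fun k => (γ k : ℤ) + (σ₃ k : ℕ) - (k : ℕ)) : ℤ) :=
  stmt7_general ℓ α β γ
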